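/- Let λ, μ, ν be pairwise distinct real numbers and let δ be a self-adjoint endomorphism of V whose eigenspaces for λ, μ, ν have dimensions 1, 1, 5 respectively. Then there exists a Cayley triple (u, v, z) such that δ(u) = λ•u, δ(v) = μ•v, and δ(x) = ν•x for each x ∈ {uv, z, uz, vz, (uv)z}. -/

import Mathlib

/-!
Eigenspaces of a self-adjoint map are mutually orthogonal, so the dimension count 1 + 1 + 5 = 7
forces the `ν`-eigenspace to be the orthogonal complement of the unit eigenvectors `u`, `v`.
Since it has dimension 5, it contains a unit vector `z` orthogonal to `uv`. It then suffices that
`uv`, `uz`, `vz`, `(uv)z` are orthogonal to `u` and `v`, which follows from the identities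
`⟪x, xy⟫ = ⟪y, xy⟫ = 0` and `⟪xy, xw⟫ = ‖x‖²⟪y, w⟫ - ⟪x, y⟫⟪x, w⟫`, valid for any vector product.
-/

open scoped RealInnerProductSpace
open Module

section Orthonormal

variable {𝕜 E : Type*} [RCLike 𝕜] [NormedAddCommGroup E] [InnerProductSpace 𝕜 E]

theorem Orthonormal.snoc {n : ℕ} {v : Fin n → E} (hv : Orthonormal 𝕜 v) {x : E} (hx : ‖x‖ = 1)
    (hvx : ∀ i, inner 𝕜 (v i) x = 0) : Orthonormal 𝕜 (Fin.snoc v x : Fin (n + 1) → E) := by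
  have hxv : ∀ i, inner 𝕜 x (v i) = 0 := fun i => by rw [← inner_conj_symm, hvx, map_zero]
  classical
  rw [orthonormal_iff_ite] at hv ⊢
  intro i j
  induction i using Fin.lastCases <;> induction j using Fin.lastCases <;>
    simp [hv, hvx, hxv, hx, inner_self_eq_norm_sq_to_K, Fin.castSucc_ne_last,
      (Fin.castSucc_ne_last _).symm]

theorem orthonormal_pair {x y : E} (hx : ‖x‖ = 1) (hy : ‖y‖ = 1) (hxy : inner 𝕜 x y = 0) :
    Orthonormal 𝕜 ![x, y] := by
  have hx' : Orthonormal 𝕜 ![x] := orthonormal_subsingleton_iff.mpr fun _ => by simp [hx]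
  simpa using hx'.snoc hy (by simpa using hxy)

end Orthonormal

section Submodule

variable {𝕜 E : Type*} [RCLike 𝕜] [NormedAddCommGroup E] [InnerProductSpace 𝕜 E]

theorem Submodule.exists_mem_norm_eq_one {K : Submodule 𝕜 E} (hK : 0 < finrank 𝕜 K) :
    ∃ x ∈ K, ‖x‖ = 1 := by
  have := Module.finite_of_finrank_pos hK
  obtain ⟨x, hxK, hx0⟩ := K.exists_mem_ne_zero_of_ne_bot (Submodule.one_le_finrank_iff.mp hK)
  exact ⟨(‖x‖⁻¹ : 𝕜) • x, K.smul_mem _ hxK, norm_smul_inv_norm hx0⟩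

theorem Submodule.exists_mem_norm_eq_one_inner_eq_zero [FiniteDimensional 𝕜 E]
    {K : Submodule 𝕜 E} (hK : 1 < finrank 𝕜 K) (y : E) :
    ∃ x ∈ K, ‖x‖ = 1 ∧ inner 𝕜 y x = 0 := by
  have hdim := Submodule.finrank_sup_add_finrank_inf_eq K (𝕜 ∙ y)ᗮ
  have hy := (𝕜 ∙ y).finrank_add_finrank_orthogonal
  have : finrank 𝕜 (𝕜 ∙ y) ≤ 1 := (finrank_span_le_card {y}).trans (by simp)
  have := (K ⊔ (𝕜 ∙ y)ᗮ).finrank_le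
  obtain ⟨x, hx, hx1⟩ := exists_mem_norm_eq_one (K := K ⊓ (𝕜 ∙ y)ᗮ) (by omega)
  exact ⟨x, hx.1, hx1, Submodule.mem_orthogonal_singleton_iff_inner_right.mp hx.2⟩

end Submodule

structure IsVectorProduct {V : Type*} [NormedAddCommGroup V] [InnerProductSpace ℝ V]
    (π : V →ₗ[ℝ] V →ₗ[ℝ] V) : Prop where
  map_self : ∀ x, π x x = 0
  orthonormal : ∀ u v, Orthonormal ℝ ![u, v] → Orthonormal ℝ ![u, v, π u v]

namespace IsVectorProduct

variable {V : Type*} [NormedAddCommGroup V] [InnerProductSpace ℝ V] {π : V →ₗ[ℝ] V →ₗ[ℝ] V}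

theorem map_swap (hπ : IsVectorProduct π) (x y : V) : π y x = -π x y := by
  have h := hπ.map_self (x + y)
  simp only [map_add, LinearMap.add_apply, hπ.map_self, zero_add, add_zero] at h
  exact eq_neg_of_add_eq_zero_left h

theorem inner_vp_eq_zero_and_norm_of_inner_eq_zero (hπ : IsVectorProduct π) {x y : V}
    (hxy : ⟪x, y⟫ = 0) : ⟪x, π x y⟫ = 0 ∧ ⟪y, π x y⟫ = 0 ∧ ‖π x y‖ = ‖x‖ * ‖y‖ := by
  rcases eq_or_ne x 0 with rfl | hx
  · simp
  rcases eq_or_ne y 0 with rfl | hy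
  · simp
  have hon := hπ.orthonormal _ _ (orthonormal_pair (norm_smul_inv_norm (𝕜 := ℝ) hx)
    (norm_smul_inv_norm (𝕜 := ℝ) hy) (by simp [real_inner_smul_left, real_inner_smul_right, hxy]))
  have h0 := hon.2 (show (0 : Fin 3) ≠ 2 by decide)
  have h1 := hon.2 (show (1 : Fin 3) ≠ 2 by decide)
  have h2 := hon.1 2
  simp [real_inner_smul_left, real_inner_smul_right, norm_smul, hx, hy] at h0 h1 h2
  refine ⟨h0, h1, ?_⟩
  field_simp at h2
  linarith

/-- Gram–Schmidt: identities about `π x y` reduce to the case `⟪x, y⟫ = 0`. -/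
theorem exists_inner_eq_zero_vp_eq (hπ : IsVectorProduct π) (x y : V) :
    ∃ (c : ℝ) (w : V), ⟪x, w⟫ = 0 ∧ y = c • x + w ∧ π x y = π x w := by
  obtain ⟨_, hp, w, hw, rfl⟩ := (ℝ ∙ x).exists_add_mem_mem_orthogonal y
  obtain ⟨c, rfl⟩ := Submodule.mem_span_singleton.mp hp
  refine ⟨c, w, Submodule.mem_orthogonal_singleton_iff_inner_right.mp hw, rfl, ?_⟩
  simp [hπ.map_self]

theorem inner_self_vp_left (hπ : IsVectorProduct π) (x y : V) : ⟪x, π x y⟫ = 0 := by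
  obtain ⟨c, w, hxw, -, hπw⟩ := hπ.exists_inner_eq_zero_vp_eq x y
  rw [hπw]
  exact (hπ.inner_vp_eq_zero_and_norm_of_inner_eq_zero hxw).1

theorem inner_self_vp_right (hπ : IsVectorProduct π) (x y : V) : ⟪y, π x y⟫ = 0 := by
  obtain ⟨c, w, hxw, rfl, hπw⟩ := hπ.exists_inner_eq_zero_vp_eq x y
  obtain ⟨hx, hw, -⟩ := hπ.inner_vp_eq_zero_and_norm_of_inner_eq_zero hxw
  rw [hπw, inner_add_left, real_inner_smul_left, hx, hw, mul_zero, add_zero]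

theorem norm_vp_sq (hπ : IsVectorProduct π) (x y : V) :
    ‖π x y‖ ^ 2 = ‖x‖ ^ 2 * ‖y‖ ^ 2 - ⟪x, y⟫ ^ 2 := by
  obtain ⟨c, w, hxw, rfl, hπw⟩ := hπ.exists_inner_eq_zero_vp_eq x y
  rw [hπw, (hπ.inner_vp_eq_zero_and_norm_of_inner_eq_zero hxw).2.2, mul_pow]
  simp only [← real_inner_self_eq_norm_sq, inner_add_left, inner_add_right, real_inner_smul_left,
    real_inner_smul_right, hxw, real_inner_comm x w]
  ring

theorem inner_vp_vp (hπ : IsVectorProduct π) (x y w : V) :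
    ⟪π x y, π x w⟫ = ⟪x, x⟫ * ⟪y, w⟫ - ⟪x, y⟫ * ⟪x, w⟫ := by
  have hyw := hπ.norm_vp_sq x (y + w)
  have hy := hπ.norm_vp_sq x y
  have hw := hπ.norm_vp_sq x w
  simp only [← real_inner_self_eq_norm_sq, map_add, inner_add_left, inner_add_right,
    real_inner_comm y w, real_inner_comm (π x y) (π x w)] at hyw hy hw ⊢
  linarith

theorem inner_vp_swap (hπ : IsVectorProduct π) (x y w : V) : ⟪w, π x y⟫ = -⟪y, π x w⟫ := by
  have h := hπ.inner_self_vp_right x (y + w)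
  simp only [map_add, inner_add_left, inner_add_right, hπ.inner_self_vp_right] at h
  linarith

theorem inner_self_vp_vp (hπ : IsVectorProduct π) (x y z : V) :
    ⟪x, π (π x y) z⟫ = ⟪x, y⟫ * ⟪x, z⟫ - ⟪x, x⟫ * ⟪y, z⟫ := by
  rw [hπ.inner_vp_swap, hπ.map_swap x (π x y), inner_neg_right, neg_neg, hπ.inner_vp_swap,
    hπ.inner_vp_vp]
  ring

theorem inner_eq_zero_of_cayley (hπ : IsVectorProduct π) {u v z : V} (huv : ⟪u, v⟫ = 0)
    (huz : ⟪u, z⟫ = 0) (hvz : ⟪v, z⟫ = 0) (huvz : ⟪π u v, z⟫ = 0) :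
    (⟪u, π u v⟫ = 0 ∧ ⟪v, π u v⟫ = 0) ∧ (⟪u, π u z⟫ = 0 ∧ ⟪v, π u z⟫ = 0) ∧
      (⟪u, π v z⟫ = 0 ∧ ⟪v, π v z⟫ = 0) ∧ (⟪u, π (π u v) z⟫ = 0 ∧ ⟪v, π (π u v) z⟫ = 0) := by
  refine ⟨⟨hπ.inner_self_vp_left u v, hπ.inner_self_vp_right u v⟩,
    ⟨hπ.inner_self_vp_left u z, ?_⟩, ⟨?_, hπ.inner_self_vp_left v z⟩, ⟨?_, ?_⟩⟩
  · rw [hπ.inner_vp_swap, real_inner_comm, huvz, neg_zero]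
  · rw [hπ.inner_vp_swap, hπ.map_swap u v, inner_neg_right, neg_neg, real_inner_comm, huvz]
  · rw [hπ.inner_self_vp_vp, huv, hvz]
    ring
  · rw [hπ.map_swap v u, map_neg, LinearMap.neg_apply, inner_neg_right, hπ.inner_self_vp_vp,
      real_inner_comm, huv, huz]
    ring

end IsVectorProduct

namespace LinearMap.IsSymmetric

variable {𝕜 E : Type*} [RCLike 𝕜] [NormedAddCommGroup E] [InnerProductSpace 𝕜 E]
  {T : E →ₗ[𝕜] E}

theorem isOrtho_eigenspace (hT : T.IsSymmetric) {a b : 𝕜} (hab : a ≠ b) :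
    End.eigenspace T a ⟂ End.eigenspace T b :=
  hT.orthogonalFamily_eigenspaces.isOrtho hab

theorem eigenspace_eq_orthogonal_sup [FiniteDimensional 𝕜 E] (hT : T.IsSymmetric) {a b c : 𝕜}
    (hab : a ≠ b) (hac : a ≠ c) (hbc : b ≠ c)
    (hdim : finrank 𝕜 (End.eigenspace T a) + finrank 𝕜 (End.eigenspace T b) +
      finrank 𝕜 (End.eigenspace T c) = finrank 𝕜 E) :
    End.eigenspace T c = (End.eigenspace T a ⊔ End.eigenspace T b)ᗮ := by
  have hle : End.eigenspace T c ≤ (End.eigenspace T a ⊔ End.eigenspace T b)ᗮ :=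
    Submodule.isOrtho_sup_right.mpr
      ⟨hT.isOrtho_eigenspace hac.symm, hT.isOrtho_eigenspace hbc.symm⟩
  refine Submodule.eq_of_le_of_finrank_eq hle ?_
  have hsup := Submodule.finrank_sup_add_finrank_inf_eq (End.eigenspace T a) (End.eigenspace T b)
  rw [disjoint_iff.mp (hT.isOrtho_eigenspace hab).disjoint, finrank_bot] at hsup
  have := (End.eigenspace T a ⊔ End.eigenspace T b).finrank_add_finrank_orthogonal
  omega

end LinearMap.IsSymmetric

theorem stmt9
    {V : Type*} [NormedAddCommGroup V] [InnerProductSpace ℝ V]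
    [FiniteDimensional ℝ V] (hdim : Module.finrank ℝ V = 7)
    (π : V →ₗ[ℝ] V →ₗ[ℝ] V) (hπalt : ∀ x : V, π x x = 0)
    (hπvp : ∀ u v : V, Orthonormal ℝ ![u, v] → Orthonormal ℝ ![u, v, π u v])
    (lam μ ν : ℝ) (hlm : lam ≠ μ) (hln : lam ≠ ν) (hmn : μ ≠ ν)
    (δ : V →ₗ[ℝ] V) (hδ : LinearMap.IsSymmetric δ)
    (h1 : Module.finrank ℝ (Module.End.eigenspace δ lam) = 1)
    (h1' : Module.finrank ℝ (Module.End.eigenspace δ μ) = 1)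
    (h5 : Module.finrank ℝ (Module.End.eigenspace δ ν) = 5) :
    ∃ u v z : V, Orthonormal ℝ ![u, v, π u v, z] ∧
      δ u = lam • u ∧ δ v = μ • v ∧ δ (π u v) = ν • π u v ∧ δ z = ν • z ∧
      δ (π u z) = ν • π u z ∧ δ (π v z) = ν • π v z ∧
      δ (π (π u v) z) = ν • π (π u v) z := by
  have hπ : IsVectorProduct π := ⟨hπalt, hπvp⟩
  obtain ⟨u, hu, hu1⟩ := Submodule.exists_mem_norm_eq_one (h1 ▸ one_pos)
  obtain ⟨v, hv, hv1⟩ := Submodule.exists_mem_norm_eq_one (h1' ▸ one_pos)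
  have huv : ⟪u, v⟫ = 0 := (hδ.isOrtho_eigenspace hlm).inner_eq hu hv
  obtain ⟨z, hz, hz1, huvz⟩ :=
    Submodule.exists_mem_norm_eq_one_inner_eq_zero (by rw [h5]; norm_num) (π u v)
  have huz : ⟪u, z⟫ = 0 := (hδ.isOrtho_eigenspace hln).inner_eq hu hz
  have hvz : ⟪v, z⟫ = 0 := (hδ.isOrtho_eigenspace hmn).inner_eq hv hz
  have hν (w : V) (hw : ⟪u, w⟫ = 0 ∧ ⟪v, w⟫ = 0) : δ w = ν • w := by
    have hE := hδ.eigenspace_eq_orthogonal_sup hlm hln hmn (by rw [h1, h1', h5, hdim])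
    rw [eq_span_singleton_of_mem_of_finrank_eq_one h1 hu (by rintro rfl; simp at hu1),
      eq_span_singleton_of_mem_of_finrank_eq_one h1' hv (by rintro rfl; simp at hv1),
      ← Submodule.inf_orthogonal] at hE
    rw [← End.mem_eigenspace_iff, hE]
    exact ⟨Submodule.mem_orthogonal_singleton_iff_inner_right.mpr hw.1,
      Submodule.mem_orthogonal_singleton_iff_inner_right.mpr hw.2⟩
  obtain ⟨huv_ν, huz_ν, hvz_ν, huvz_ν⟩ := hπ.inner_eq_zero_of_cayley huv huz hvz huvz
  have horth : Orthonormal ℝ ![u, v, π u v, z] := by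
    simpa using (hπ.orthonormal u v (orthonormal_pair hu1 hv1 huv)).snoc hz1
      (by simp [Fin.forall_fin_succ, huz, hvz, huvz])
  exact ⟨u, v, z, horth, End.mem_eigenspace_iff.mp hu, End.mem_eigenspace_iff.mp hv,
    hν _ huv_ν, End.mem_eigenspace_iff.mp hz, hν _ huz_ν, hν _ hvz_ν, hν _ huvz_ν⟩
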